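/- The map (v, μ) ↦ (v², μ·v) from 𝕌 × ℝ to the Möbius set M = {(u,z) ∈ 𝕌 × ℂ : u·conj(z) = z} is surjective, and two pairs (v, μ), (v', μ') have the same image if and only if (v', μ') = ±(v, μ). -/

import Mathlib

/-! A point `(u, z)` of the Möbius set is hit by taking a square root `v` of `u`: the condition
`v² · conj z = z` says exactly that `z · conj v = z / v` is real. The fibres are `±(v, μ)`
because `v` is determined by `v²` up to sign, and then `μ` by `μ · v`, as `v ≠ 0`. -/

open Complex ComplexConjugate

theorem exists_sq_eq_of_norm_eq_one {u : ℂ} (hu : ‖u‖ = 1) : ∃ v : ℂ, ‖v‖ = 1 ∧ v ^ 2 = u := by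
  obtain ⟨v, hv⟩ := IsAlgClosed.exists_pow_nat_eq u two_pos
  refine ⟨v, ?_, hv⟩
  exact (pow_eq_one_iff_of_nonneg (norm_nonneg v) two_ne_zero).mp (by rw [← norm_pow, hv, hu])

theorem exists_ofReal_mul_eq_of_sq_mul_conj_eq {v z : ℂ} (hv : ‖v‖ = 1)
    (hz : v ^ 2 * conj z = z) : ∃ μ : ℝ, (μ : ℂ) * v = z := by
  have hvv : v * conj v = 1 := by rw [mul_conj, normSq_eq_norm_sq, hv]; norm_num
  have hreal : conj (z * conj v) = z * conj v := by
    rw [map_mul, conj_conj]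
    linear_combination (-conj v) * hz.symm + (-(v * conj z)) * hvv
  refine ⟨(z * conj v).re, ?_⟩
  rw [conj_eq_iff_re.mp hreal]
  linear_combination z * hvv

theorem ofReal_mul_left_inj {v : ℂ} (hv : v ≠ 0) {μ μ' : ℝ} :
    (μ : ℂ) * v = μ' * v ↔ μ = μ' := by
  rw [mul_left_inj' hv, ofReal_inj]

theorem stmt_2 :
    (∀ p : ℂ × ℂ, ‖p.1‖ = 1 → p.1 * (starRingEnd ℂ) p.2 = p.2 →
      ∃ (v : ℂ) (μ : ℝ), ‖v‖ = 1 ∧ (v ^ 2, (μ : ℂ) * v) = p) ∧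
    (∀ (v v' : ℂ) (μ μ' : ℝ), ‖v‖ = 1 → ‖v'‖ = 1 →
      ((v ^ 2, (μ : ℂ) * v) = (v' ^ 2, (μ' : ℂ) * v') ↔
        ((v', μ') = (v, μ) ∨ (v', μ') = (-v, -μ)))) := by
  refine ⟨fun ⟨u, z⟩ hu huz => ?_, fun v v' μ μ' hv _ => ?_⟩
  · simp only at hu huz
    obtain ⟨v, hv, rfl⟩ := exists_sq_eq_of_norm_eq_one hu
    obtain ⟨μ, rfl⟩ := exists_ofReal_mul_eq_of_sq_mul_conj_eq hv huz
    exact ⟨v, μ, hv, rfl⟩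
  have hv0 : v ≠ 0 := norm_ne_zero_iff.mp (by simp [hv])
  simp only [Prod.mk.injEq]
  constructor
  · rintro ⟨hsq, hmul⟩
    rcases sq_eq_sq_iff_eq_or_eq_neg.mp hsq.symm with rfl | rfl
    · exact .inl ⟨rfl, ((ofReal_mul_left_inj hv0).mp hmul).symm⟩
    · refine .inr ⟨rfl, ?_⟩
      have : (μ : ℂ) * v = ((-μ' : ℝ) : ℂ) * v := by push_cast; linear_combination hmul
      linarith [(ofReal_mul_left_inj hv0).mp this]
  · rintro (⟨rfl, rfl⟩ | ⟨rfl, rfl⟩)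
    · exact ⟨rfl, rfl⟩
    · exact ⟨by ring, by push_cast; ring⟩
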